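/- With Q(R) = 2·arctan(R²) and Φ(R) = 4R²/(1+R⁴), the function w(R) = R⁴/(1+R⁴) satisfies, for all R > 0, w''(R) + w'(R)/R − (4cos(2Q(R))/R²)·w(R) = (12R² − 4R⁶)/(1+R⁴)², and moreover (12R² − 4R⁶)/(1+R⁴)² = R·Φ'(R) + Φ(R). -/

import Mathlib

noncomputable def Q (R : ℝ) : ℝ := 2 * Real.arctan (R ^ 2)

noncomputable def Phi (R : ℝ) : ℝ := 4 * R ^ 2 / (1 + R ^ 4)

noncomputable def w (R : ℝ) : ℝ := R ^ 4 / (1 + R ^ 4)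

/-!
Everything is explicit: `cos (2 Q) = cos (4 arctan R²)` is a rational function of `R`, by the
double-angle formula and `cos² (arctan x) = 1 / (1 + x²)`, and `w'`, `w''`, `Φ'` are computed by
the quotient rule, so both identities reduce to identities of rational functions with the
nonvanishing denominators `R` and `1 + R⁴`.
-/

open Real

theorem Real.cos_two_mul_arctan (x : ℝ) : cos (2 * arctan x) = (1 - x ^ 2) / (1 + x ^ 2) := by
  have : 1 + x ^ 2 ≠ 0 := by positivity
  rw [cos_two_mul, cos_sq_arctan]
  field_simp
  ring

theorem cos_two_mul_Q (R : ℝ) :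
    cos (2 * Q R) = (1 - 6 * R ^ 4 + R ^ 8) / (1 + R ^ 4) ^ 2 := by
  have : 1 + R ^ 4 ≠ 0 := by positivity
  rw [Q, ← mul_assoc, mul_comm 2 2, mul_assoc, cos_two_mul, cos_two_mul_arctan]
  field_simp
  ring

theorem hasDerivAt_w (R : ℝ) : HasDerivAt w (4 * R ^ 3 / (1 + R ^ 4) ^ 2) R := by
  have h : HasDerivAt (fun x ↦ x ^ 4 / (1 + x ^ 4)) _ R :=
    (hasDerivAt_pow 4 R).div ((hasDerivAt_pow 4 R).const_add 1) (by positivity)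
  refine h.congr_deriv ?_
  norm_num
  ring

theorem deriv_w : deriv w = fun R ↦ 4 * R ^ 3 / (1 + R ^ 4) ^ 2 :=
  funext fun R ↦ (hasDerivAt_w R).deriv

theorem hasDerivAt_deriv_w (R : ℝ) :
    HasDerivAt (deriv w) ((12 * R ^ 2 - 20 * R ^ 6) / (1 + R ^ 4) ^ 3) R := by
  have h : HasDerivAt (fun x ↦ 4 * x ^ 3 / (1 + x ^ 4) ^ 2) _ R :=
    ((hasDerivAt_pow 3 R).const_mul 4).div (((hasDerivAt_pow 4 R).const_add 1).pow 2)
      (by positivity)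
  rw [deriv_w]
  refine h.congr_deriv ?_
  have : 1 + R ^ 4 ≠ 0 := by positivity
  norm_num
  field_simp
  ring

theorem hasDerivAt_Phi (R : ℝ) : HasDerivAt Phi ((8 * R - 8 * R ^ 5) / (1 + R ^ 4) ^ 2) R := by
  have h : HasDerivAt (fun x ↦ 4 * x ^ 2 / (1 + x ^ 4)) _ R :=
    ((hasDerivAt_pow 2 R).const_mul 4).div ((hasDerivAt_pow 4 R).const_add 1) (by positivity)
  refine h.congr_deriv ?_
  norm_num
  ring

theorem v10_equation :
    ∀ R : ℝ, 0 < R →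
      (deriv (deriv w) R + deriv w R / R - (4 * Real.cos (2 * Q R) / R ^ 2) * w R
        = (12 * R ^ 2 - 4 * R ^ 6) / (1 + R ^ 4) ^ 2) ∧
      (12 * R ^ 2 - 4 * R ^ 6) / (1 + R ^ 4) ^ 2 = R * deriv Phi R + Phi R := by
  intro R hR
  have : 1 + R ^ 4 ≠ 0 := by positivity
  constructor
  · rw [(hasDerivAt_deriv_w R).deriv, (hasDerivAt_w R).deriv, cos_two_mul_Q, w]
    field_simp
    ring
  · rw [(hasDerivAt_Phi R).deriv, Phi]
    field_simp
    ring
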